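/- Let q be a prime power and let ζ be a generator of F_{q²}^×. Then the set S = { ζ^i : 0 < i ≤ (q+1)/2 } (indices taken over integers i in that range) is a complete set of unique representatives for the equivalence relation on F_{q²} \ F_q generated by multiplication by elements of F_q^× and inversion: every element of F_{q²} \ F_q can be written as c·σ or c·σ⁻¹ for a unique σ ∈ S ∩ (F_{q²}\F_q) and some c ∈ F_q^×, and no two distinct elements of S ∩ (F_{q²}\F_q) are equivalent. -/

import Mathlib

/-!
`F_{q²}^× = ⟨ζ⟩` has order `(q + 1)(q - 1)`, and `F_q` is the set of roots of `X ^ q - X`,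
so `ζ ^ m ∈ F_q` iff `q + 1 ∣ m`. Writing `α = ζ ^ a`, we get `α = c ζ ^ i` for some
`c ∈ F_q^×` iff `a = i` in `ZMod (q + 1)`, and `α = c ζ ^ (-i)` iff `a = -i`.
The unique `i ≤ (q + 1) / 2` with `a = ± i` is `|ZMod.valMinAbs a|`.
-/

open Polynomial Finset

theorem FiniteField.mem_range_algebraMap_iff_pow_card_eq_self {F K : Type*} [Field F]
    [Fintype F] [Field K] [Algebra F K] {x : K} :
    x ∈ Set.range (algebraMap F K) ↔ x ^ Fintype.card F = x := by
  classical
  refine ⟨fun ⟨c, hc⟩ => by rw [← hc, ← map_pow, FiniteField.pow_card], fun hx => ?_⟩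
  by_contra hxF
  have hq : 1 < Fintype.card F := Fintype.one_lt_card
  have hp := FiniteField.X_pow_card_sub_X_ne_zero K hq
  -- `F` and `x` together give `q + 1` roots of the degree `q` polynomial `X ^ q - X`.
  let Z : Finset K := insert x (univ.image (algebraMap F K))
  have hZ : Z.val ⊆ (X ^ Fintype.card F - X : K[X]).roots := fun z hz => by
    rw [mem_roots hp, IsRoot, eval_sub, eval_pow, eval_X, sub_eq_zero]
    obtain rfl | ⟨c, -, rfl⟩ := (Finset.mem_insert.mp hz).imp_right Finset.mem_image.mp
    · exact hx
    · rw [← map_pow, FiniteField.pow_card]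
  have hcard := card_le_degree_of_subset_roots hZ
  rw [card_insert_of_notMem (by simpa using hxF),
    card_image_of_injective _ (algebraMap F K).injective, card_univ,
    FiniteField.X_pow_card_sub_X_natDegree_eq K hq] at hcard
  omega

theorem FiniteField.zpow_mem_range_algebraMap_iff {F K : Type*} [Field F] [Fintype F]
    [Field K] [Algebra F K] {ζ : Kˣ} (hζ : orderOf ζ = Fintype.card F ^ 2 - 1) (m : ℤ) :
    ((ζ ^ m : Kˣ) : K) ∈ Set.range (algebraMap F K) ↔
      (m : ZMod (Fintype.card F + 1)) = 0 := by
  have hq : 1 < Fintype.card F := Fintype.one_lt_card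
  have hord : (orderOf ζ : ℤ) = (Fintype.card F + 1) * (Fintype.card F - 1) := by
    rw [hζ, Nat.cast_sub (Nat.one_le_pow _ _ (by omega))]
    push_cast
    ring
  rw [mem_range_algebraMap_iff_pow_card_eq_self, ← Units.val_pow_eq_pow_val, Units.val_inj,
    ← zpow_natCast, ← zpow_mul, zpow_eq_zpow_iff_modEq, Int.modEq_iff_dvd, hord,
    show m - m * Fintype.card F = -(m * (Fintype.card F - 1)) by ring, dvd_neg,
    mul_dvd_mul_iff_right (by omega), ZMod.intCast_zmod_eq_zero_iff_dvd]
  norm_cast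

theorem exists_ne_zero_eq_algebraMap_mul_iff {F K : Type*} [CommSemiring F] [Field K]
    [Algebra F K] {x y : K} (hx : x ≠ 0) (hy : y ≠ 0) :
    (∃ c : F, c ≠ 0 ∧ x = algebraMap F K c * y) ↔ x / y ∈ Set.range (algebraMap F K) := by
  refine ⟨fun ⟨c, _, hc⟩ => ⟨c, by rw [hc, mul_div_cancel_right₀ _ hy]⟩, ?_⟩
  rintro ⟨c, hc⟩
  refine ⟨c, fun h => ?_, by rw [hc, div_mul_cancel₀ _ hy]⟩
  rw [h, map_zero] at hc
  exact div_ne_zero hx hy hc.symm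

theorem FiniteField.exists_ne_zero_zpow_eq_algebraMap_mul_zpow_iff {F K : Type*} [Field F]
    [Fintype F] [Field K] [Algebra F K] {ζ : Kˣ} (hζ : orderOf ζ = Fintype.card F ^ 2 - 1)
    (a m : ℤ) :
    (∃ c : F, c ≠ 0 ∧ ((ζ ^ a : Kˣ) : K) = algebraMap F K c * ((ζ ^ m : Kˣ) : K)) ↔
      (a : ZMod (Fintype.card F + 1)) = m := by
  rw [exists_ne_zero_eq_algebraMap_mul_iff (Units.ne_zero _) (Units.ne_zero _),
    ← Units.val_div_eq_div_val, div_eq_mul_inv, ← zpow_sub, zpow_mem_range_algebraMap_iff hζ,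
    Int.cast_sub, sub_eq_zero]

theorem ZMod.existsUnique_le_half_eq_or_eq_neg {n : ℕ} [NeZero n] (x : ZMod n) :
    ∃! j : ℕ, j ≤ n / 2 ∧ (x = j ∨ x = -j) := by
  refine ⟨x.valMinAbs.natAbs, ⟨x.natAbs_valMinAbs_le, ?_⟩, fun j ⟨hj, hx⟩ => ?_⟩
  · rw [natCast_natAbs_valMinAbs]
    split_ifs <;> simp
  · rw [natAbs_valMinAbs_eq_natAbs_valMinAbs.mpr hx, valMinAbs_natCast_of_le_half hj,
      Int.natAbs_natCast]

theorem ZMod.existsUnique_pos_le_half_eq_or_eq_neg {n : ℕ} [NeZero n] {x : ZMod n}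
    (hx : x ≠ 0) :
    ∃! j : ℕ, (0 < j ∧ j ≤ n / 2 ∧ (j : ZMod n) ≠ 0) ∧ (x = j ∨ x = -j) := by
  refine (existsUnique_congr fun j => ⟨fun ⟨⟨_, hj, _⟩, hxj⟩ => ⟨hj, hxj⟩, ?_⟩).mpr
    x.existsUnique_le_half_eq_or_eq_neg
  rintro ⟨hj, hxj⟩
  have hj0 : (j : ZMod n) ≠ 0 := fun h => by rcases hxj with h' | h' <;> simp [h, h'] at hx
  exact ⟨⟨Nat.pos_of_ne_zero (by rintro rfl; exact hj0 Nat.cast_zero), hj, hj0⟩, hxj⟩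

theorem representatives_up_to_scaling_and_inversion
    {F : Type*} [Field F] [Fintype F] (q : ℕ) (hq : Fintype.card F = q)
    {K : Type*} [Field K] [Fintype K] [Algebra F K]
    (hK : Fintype.card K = q ^ 2)
    (ζ : Kˣ) (hζ : ∀ x : Kˣ, x ∈ Subgroup.zpowers ζ)
    (α : K) (hα : α ∉ Set.range (algebraMap F K)) :
    ∃! i : ℕ, (0 < i ∧ i ≤ (q + 1) / 2 ∧
        ((ζ : K) ^ i ∉ Set.range (algebraMap F K))) ∧
      ∃ c : F, c ≠ 0 ∧
        (α = algebraMap F K c * (ζ : K) ^ i ∨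
         α = algebraMap F K c * ((ζ : K) ^ i)⁻¹) := by
  subst hq
  have hord : orderOf ζ = Fintype.card F ^ 2 - 1 := by
    rw [orderOf_eq_card_of_forall_mem_zpowers hζ, Nat.card_units, Nat.card_eq_fintype_card, hK]
  obtain ⟨a, ha⟩ := hζ (Units.mk0 α fun h => hα ⟨0, by rw [map_zero, h]⟩)
  obtain rfl : α = ((ζ ^ a : Kˣ) : K) := congrArg Units.val ha.symm
  rw [FiniteField.zpow_mem_range_algebraMap_iff hord] at hα
  refine (existsUnique_congr fun j => ?_).mpr (ZMod.existsUnique_pos_le_half_eq_or_eq_neg hα)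
  have hpow : (ζ : K) ^ j = ((ζ ^ (j : ℤ) : Kˣ) : K) := by simp
  have hinv : ((ζ : K) ^ j)⁻¹ = ((ζ ^ (-j : ℤ) : Kˣ) : K) := by simp
  simp only [and_or_left, exists_or]
  rw [hinv, hpow, FiniteField.zpow_mem_range_algebraMap_iff hord,
    FiniteField.exists_ne_zero_zpow_eq_algebraMap_mul_zpow_iff hord,
    FiniteField.exists_ne_zero_zpow_eq_algebraMap_mul_zpow_iff hord]
  push_cast
  rfl
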